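/- arXiv:1202.3181 — 2 statements merged into one kernel-verified Lean document; each statement's English description precedes it below -/
import Mathlib

section
/- For real numbers A, B and η > 0, the integral over α ∈ ℝ of 1/(|α + A + iη| · |α + B + iη|) is bounded by C/|A - B + iη| · (1 + log₊|( A - B)/η|), where log₊ x = max{0, log x} for x > 0, log₊ 0 = 0, and C is a universal constant. -/
open MeasureTheory

noncomputable def logPlus (x : ℝ) : ℝ := max 0 (Real.log x)

/-!
Write `a = |α + A + iη|`, `b = |α + B + iη|` and `M = |A - B + iη|`. Since `|A - B| ≤ a + b` and
`η ≤ min a b`, we have `M ≤ 3 max a b`; so with `L = M / 3`, if `a ≤ b` then `1 / (ab)` is at most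
both `1 / (L a)` and `1 / a²`. Hence the integrand is dominated by `k (α + A) + k (α + B)`, where
`k x = min (1 / (L r)) (1 / r²)` with `r = |x + iη|`. Integrating `1 / (L r)` over `|x| ≤ L` gives
`(2 / L) arsinh (L / η)`, and `1 / x²` over `|x| > L` gives `2 / L`; finally
`arsinh (L / η) ≤ log 3 + log⁺ |(A - B) / η|`.
-/

open Real Set

lemma logPlus_eq_posLog : logPlus = posLog := rfl

lemma arsinh_le_log_three_add_posLog {y t : ℝ} (hy : 0 ≤ y) (ht : 0 ≤ t) (hyt : y ≤ max 1 t) :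
    arsinh y ≤ log 3 + log⁺ t := by
  have hsqrt : √(1 + y ^ 2) ≤ 1 + y := (sqrt_le_left (by linarith)).mpr (by nlinarith)
  calc arsinh y = log (y + √(1 + y ^ 2)) := rfl
    _ ≤ log (3 * max 1 t) :=
      log_le_log (by positivity) (by linarith [le_max_left 1 t])
    _ = log 3 + log⁺ t := by
      rw [log_mul (by norm_num) (by positivity), posLog_eq_log_max_one ht]

lemma sqrt_sub_sq_add_sq_le_three_mul_max (x A B η : ℝ) :
    √((A - B) ^ 2 + η ^ 2) ≤ 3 * max √((x + A) ^ 2 + η ^ 2) √((x + B) ^ 2 + η ^ 2) := by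
  have hA : |x + A| ≤ √((x + A) ^ 2 + η ^ 2) := abs_le_sqrt (by nlinarith)
  have hB : |x + B| ≤ √((x + B) ^ 2 + η ^ 2) := abs_le_sqrt (by nlinarith)
  have hη : |η| ≤ √((x + B) ^ 2 + η ^ 2) := abs_le_sqrt (by nlinarith)
  have hAB : |A - B| ≤ |x + A| + |x + B| := by
    simpa using abs_sub (x + A) (x + B)
  have hM : √((A - B) ^ 2 + η ^ 2) ≤ |A - B| + |η| :=
    (sqrt_le_left (by positivity)).mpr
      (by nlinarith [sq_abs (A - B), sq_abs η, abs_nonneg (A - B), abs_nonneg η])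
  linarith [le_max_left (√((x + A) ^ 2 + η ^ 2)) (√((x + B) ^ 2 + η ^ 2)),
    le_max_right (√((x + A) ^ 2 + η ^ 2)) (√((x + B) ^ 2 + η ^ 2))]

noncomputable def cutoff (L r : ℝ) : ℝ := min (L * r)⁻¹ (r ^ 2)⁻¹

lemma cutoff_nonneg {L r : ℝ} (hL : 0 ≤ L) (hr : 0 ≤ r) : 0 ≤ cutoff L r :=
  le_min (by positivity) (by positivity)

lemma inv_mul_le_cutoff {L a b : ℝ} (hL : 0 < L) (ha : 0 < a) (hab : a ≤ b) (hLb : L ≤ b) :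
    (a * b)⁻¹ ≤ cutoff L a :=
  le_min (inv_anti₀ (by positivity) (by rw [mul_comm]; gcongr))
    (inv_anti₀ (by positivity) (by rw [sq]; gcongr))

lemma inv_mul_le_cutoff_add_cutoff {L a b : ℝ} (hL : 0 < L) (ha : 0 < a) (hb : 0 < b)
    (h : L ≤ max a b) : (a * b)⁻¹ ≤ cutoff L a + cutoff L b := by
  rcases le_total a b with hab | hba
  · have := inv_mul_le_cutoff hL ha hab (by rwa [max_eq_right hab] at h)
    linarith [cutoff_nonneg hL.le hb.le]
  · have := inv_mul_le_cutoff hL hb hba (by rwa [max_eq_left hba] at h)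
    rw [mul_comm] at this
    linarith [cutoff_nonneg hL.le ha.le]

section Kernel

variable {L η : ℝ}

lemma integrable_inv_sq_add_sq (hη : η ≠ 0) : Integrable fun x : ℝ => (x ^ 2 + η ^ 2)⁻¹ := by
  refine ((integrable_inv_one_add_sq.comp_mul_left' (inv_ne_zero hη)).const_mul (η ^ 2)⁻¹).congr
    (.of_forall fun x => ?_)
  field_simp
  ring

lemma integrable_cutoff_sqrt (hL : 0 ≤ L) (hη : η ≠ 0) :
    Integrable fun x : ℝ => cutoff L √(x ^ 2 + η ^ 2) := by
  refine (integrable_inv_sq_add_sq hη).mono' (by unfold cutoff; fun_prop) (.of_forall fun x => ?_)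
  rw [norm_of_nonneg (cutoff_nonneg hL (sqrt_nonneg _))]
  exact (min_le_right _ _).trans_eq (by rw [sq_sqrt (by positivity)])

lemma hasDerivAt_inv_mul_arsinh_div (hη : 0 < η) (x : ℝ) :
    HasDerivAt (fun y => L⁻¹ * arsinh (y / η)) (L * √(x ^ 2 + η ^ 2))⁻¹ x := by
  have h := ((hasDerivAt_arsinh (x / η)).comp x ((hasDerivAt_id x).div_const η)).const_mul L⁻¹
  refine h.congr_deriv ?_
  have hs : √(x ^ 2 + η ^ 2) = η * √(1 + (x / η) ^ 2) := by
    rw [show x ^ 2 + η ^ 2 = η ^ 2 * (1 + (x / η) ^ 2) by field_simp; ring,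
      sqrt_mul (sq_nonneg η), sqrt_sq hη.le]
  have : 0 < √(1 + (x / η) ^ 2) := sqrt_pos.mpr (by positivity)
  rw [hs]
  field_simp

lemma integral_Ioc_cutoff_sqrt_le (hL : 0 < L) (hη : 0 < η) :
    ∫ x in Ioc 0 L, cutoff L √(x ^ 2 + η ^ 2) ≤ L⁻¹ * arsinh (L / η) := by
  have hcont : Continuous fun x : ℝ => (L * √(x ^ 2 + η ^ 2))⁻¹ :=
    Continuous.inv₀ (by fun_prop) fun x => by positivity
  rw [← intervalIntegral.integral_of_le hL.le]
  calc ∫ x in 0..L, cutoff L √(x ^ 2 + η ^ 2)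
      ≤ ∫ x in 0..L, (L * √(x ^ 2 + η ^ 2))⁻¹ :=
        intervalIntegral.integral_mono_on hL.le
          (integrable_cutoff_sqrt hL.le hη.ne').intervalIntegrable (hcont.intervalIntegrable _ _)
          fun x _ => min_le_left _ _
    _ = L⁻¹ * arsinh (L / η) := by
        rw [intervalIntegral.integral_eq_sub_of_hasDerivAt
          (fun x _ => hasDerivAt_inv_mul_arsinh_div hη x) (hcont.intervalIntegrable _ _)]
        simp

lemma integral_Ioi_cutoff_sqrt_le (hL : 0 < L) (hη : η ≠ 0) :
    ∫ x in Ioi L, cutoff L √(x ^ 2 + η ^ 2) ≤ L⁻¹ := by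
  have hle : ∀ x ∈ Ioi L, cutoff L √(x ^ 2 + η ^ 2) ≤ x ^ (-2 : ℝ) := fun x hx => by
    have hx : 0 < x := hL.trans hx
    rw [rpow_neg hx.le, rpow_two]
    exact (min_le_right _ _).trans
      (inv_anti₀ (by positivity) (by rw [sq_sqrt (by positivity)]; nlinarith))
  calc ∫ x in Ioi L, cutoff L √(x ^ 2 + η ^ 2)
      ≤ ∫ x in Ioi L, x ^ (-2 : ℝ) :=
        setIntegral_mono_on (integrable_cutoff_sqrt hL.le hη).integrableOn
          (integrableOn_Ioi_rpow_of_lt (by norm_num) hL) measurableSet_Ioi hle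
    _ = L⁻¹ := by
        rw [integral_Ioi_rpow_of_lt (by norm_num) hL]
        norm_num [rpow_neg_one]

lemma integral_cutoff_sqrt_le (hL : 0 < L) (hη : 0 < η) :
    ∫ x, cutoff L √(x ^ 2 + η ^ 2) ≤ 2 * L⁻¹ * (arsinh (L / η) + 1) := by
  have hf := integrable_cutoff_sqrt hL.le hη.ne'
  have heven : ∫ x, cutoff L √(x ^ 2 + η ^ 2) = ∫ x, cutoff L √(|x| ^ 2 + η ^ 2) := by
    simp_rw [sq_abs]
  rw [heven, integral_comp_abs (f := fun x => cutoff L √(x ^ 2 + η ^ 2)),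
    ← Ioc_union_Ioi_eq_Ioi hL.le,
    setIntegral_union Ioc_disjoint_Ioi_same measurableSet_Ioi hf.integrableOn hf.integrableOn]
  linarith [integral_Ioc_cutoff_sqrt_le hL hη, integral_Ioi_cutoff_sqrt_le hL hη.ne']

end Kernel

lemma norm_ofReal_add_ofReal_add_mul_I (x y η : ℝ) :
    ‖(x : ℂ) + y + η * Complex.I‖ = √((x + y) ^ 2 + η ^ 2) := by
  rw [← Complex.ofReal_add, Complex.norm_add_mul_I]

theorem stmt_0 : ∃ C : ℝ, 0 < C ∧ ∀ (A B η : ℝ), 0 < η →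
    (∫ α : ℝ, 1 / (‖(α : ℂ) + (A : ℂ) + (η : ℂ) * Complex.I‖ *
        ‖(α : ℂ) + (B : ℂ) + (η : ℂ) * Complex.I‖)) ≤
      C / ‖(A : ℂ) - (B : ℂ) + (η : ℂ) * Complex.I‖ *
        (1 + logPlus |(A - B) / η|) := by
  refine ⟨12 * (1 + log 3), by positivity, fun A B η hη => ?_⟩
  rw [← Complex.ofReal_sub, Complex.norm_add_mul_I, logPlus_eq_posLog]
  simp_rw [norm_ofReal_add_ofReal_add_mul_I, one_div]
  set M := √((A - B) ^ 2 + η ^ 2)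
  set t := |(A - B) / η|
  have hM : 0 < M := by positivity
  have hL : 0 < M / 3 := by positivity
  set k : ℝ → ℝ := fun x => cutoff (M / 3) √(x ^ 2 + η ^ 2)
  have hk := integrable_cutoff_sqrt hL.le hη.ne'
  have hpoint (α : ℝ) : (√((α + A) ^ 2 + η ^ 2) * √((α + B) ^ 2 + η ^ 2))⁻¹ ≤ k (α + A) + k (α + B) :=
    inv_mul_le_cutoff_add_cutoff hL (by positivity) (by positivity)
      (by linarith [sqrt_sub_sq_add_sq_le_three_mul_max α A B η])
  have hshift : ∫ α, (k (α + A) + k (α + B)) = 2 * ∫ x, k x := by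
    rw [integral_add (hk.comp_add_right A) (hk.comp_add_right B), integral_add_right_eq_self k,
      integral_add_right_eq_self k]
    ring
  have harsinh : arsinh (M / 3 / η) ≤ log 3 + log⁺ t := by
    refine arsinh_le_log_three_add_posLog (by positivity) (abs_nonneg _) ?_
    have hMle : M ≤ |A - B| + η :=
      (sqrt_le_left (by positivity)).mpr (by nlinarith [sq_abs (A - B), abs_nonneg (A - B)])
    have ht : |A - B| = η * t := by
      simp only [t, abs_div, abs_of_pos hη]
      field_simp
    rw [div_le_iff₀ hη]
    nlinarith [le_max_left 1 t, le_max_right 1 t]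
  calc ∫ α, (√((α + A) ^ 2 + η ^ 2) * √((α + B) ^ 2 + η ^ 2))⁻¹
      ≤ ∫ α, (k (α + A) + k (α + B)) :=
        integral_mono_of_nonneg (.of_forall fun α => by positivity)
          ((hk.comp_add_right A).add (hk.comp_add_right B)) (.of_forall hpoint)
    _ = 2 * ∫ x, k x := hshift
    _ ≤ 2 * (2 * (M / 3)⁻¹ * (arsinh (M / 3 / η) + 1)) := by
        gcongr
        exact integral_cutoff_sqrt_le hL hη
    _ = 12 / M * (arsinh (M / 3 / η) + 1) := by
        field_simp
        ring
    _ ≤ 12 / M * ((1 + log 3) * (1 + log⁺ t)) := by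
        gcongr
        nlinarith [posLog_nonneg (x := t), log_nonneg (show (1 : ℝ) ≤ 3 by norm_num)]
    _ = 12 * (1 + log 3) / M * (1 + log⁺ t) := by ring
end

section
/- Let d > m ≥ 2 and λ as before (λ = d - m if m < d ≤ 2m, λ = m if d > 2m). For any δ ∈ (0, 1), ε ∈ (0,1), α ≥ 0, η ≥ η₀ > 0: ∫_{ℝ^d} ε^m ⟨ξ⟩^{-2d} |ε^m α + |ξ|^m + iε^m η|^{-2} dξ ≤ C ε^{λ(1-δ)} max{α^{λ(1-δ)/m}, 1}, with C depending only on d, m, δ, η₀. -/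
/-!
Write `c = ε ^ m` and `z = c α + |ξ| ^ m + i c η`. Since `|z| ≥ |ξ| ^ m` (real part) and
`|z| ≥ c η₀` (imaginary part), interpolation gives `|z|² ≥ |ξ| ^ (m (1 + p)) (c η₀) ^ (1 - p)` for
every `p ∈ [0, 1]`. With `p = λ (1 - δ) / m` the integrand is then at most
`ε ^ (λ (1 - δ)) η₀ ^ (p - 1) ⟨ξ⟩ ^ (-2d) |ξ| ^ (-(m + λ (1 - δ)))`. This is integrable near
the origin because `m + λ (1 - δ) < m + λ ≤ d`, and at infinity because of `⟨ξ⟩ ^ (-2d)`.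
The factor `max {α ^ …, 1}` is at least `1`, so the bound is uniform in `α`.
-/

open MeasureTheory Metric Set Real Module

section RadialIntegrability

variable {E : Type*} [NormedAddCommGroup E] [NormedSpace ℝ E] [FiniteDimensional ℝ E]
  [MeasurableSpace E] [BorelSpace E] (μ : Measure E) [μ.IsAddHaarMeasure]

lemma integrableOn_ball_norm_rpow_neg [Nontrivial E] {s : ℝ} (hs : s < finrank ℝ E) {r : ℝ}
    (hr : 0 < r) : IntegrableOn (fun x : E ↦ ‖x‖ ^ (-s)) (ball 0 r) μ := by
  rw [integrableOn_fun_norm_addHaar μ (f := fun y ↦ y ^ (-s))]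
  have hpow : IntegrableOn (fun y : ℝ ↦ y ^ ((finrank ℝ E - 1 : ℕ) - s)) (Ioo 0 r) := by
    rw [intervalIntegral.integrableOn_Ioo_rpow_iff hr]
    have : 1 ≤ finrank ℝ E := finrank_pos
    push_cast [this]
    linarith
  refine hpow.congr_fun (fun y hy ↦ ?_) measurableSet_Ioo
  rw [smul_eq_mul, ← rpow_natCast, ← rpow_add hy.1, sub_eq_add_neg]

lemma integrable_inv_one_add_norm_sq_pow_mul_norm_rpow_neg {k : ℕ}
    (hk : finrank ℝ E < 2 * k) {s : ℝ} (hs₀ : 0 ≤ s) (hs : s < finrank ℝ E) :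
    Integrable (fun x : E ↦ ((1 + ‖x‖ ^ 2) ^ k)⁻¹ * ‖x‖ ^ (-s)) μ := by
  have : Nontrivial E := nontrivial_of_finrank_pos (R := ℝ) (by exact_mod_cast hs₀.trans_lt hs)
  have hmeas : AEStronglyMeasurable (fun x : E ↦ ((1 + ‖x‖ ^ 2) ^ k)⁻¹ * ‖x‖ ^ (-s)) μ := by
    fun_prop
  have hweight : ∀ x : E, 0 ≤ ((1 + ‖x‖ ^ 2) ^ k)⁻¹ := fun x ↦ by positivity
  rw [← integrableOn_univ, ← union_compl_self (ball (0 : E) 1)]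
  refine .union ((integrableOn_ball_norm_rpow_neg μ hs one_pos).mono' hmeas.restrict
    (.of_forall fun x ↦ ?_)) ?_
  · rw [norm_mul, Real.norm_of_nonneg (hweight x), Real.norm_of_nonneg (by positivity)]
    exact mul_le_of_le_one_left (by positivity)
      (inv_le_one_of_one_le₀ (one_le_pow₀ (by nlinarith [sq_nonneg ‖x‖])))
  · have htail : Integrable (fun x : E ↦ ((1 : ℝ) + ‖x‖ ^ 2) ^ (-(2 * k : ℝ) / 2)) μ :=
      integrable_rpow_neg_one_add_norm_sq (by exact_mod_cast hk)
    refine htail.integrableOn.mono' hmeas.restrict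
      ((ae_restrict_iff' measurableSet_ball.compl).2 (.of_forall fun x hx ↦ ?_))
    have hx1 : 1 ≤ ‖x‖ := by simpa using hx
    rw [norm_mul, Real.norm_of_nonneg (hweight x), Real.norm_of_nonneg (by positivity),
      neg_div, mul_div_cancel_left₀ _ two_ne_zero,
      rpow_neg (by positivity : (0 : ℝ) ≤ 1 + ‖x‖ ^ 2), rpow_natCast]
    exact mul_le_of_le_one_right (hweight x) (rpow_le_one_of_one_le_of_nonpos hx1 (by linarith))

end RadialIntegrability

lemma rpow_one_add_mul_rpow_one_sub_le_sq {a b r p : ℝ} (ha : 0 ≤ a) (hb : 0 ≤ b) (har : a ≤ r)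
    (hbr : b ≤ r) (hp₀ : 0 ≤ p) (hp₁ : p ≤ 1) : a ^ (1 + p) * b ^ (1 - p) ≤ r ^ 2 := by
  have hr : 0 ≤ r := ha.trans har
  calc a ^ (1 + p) * b ^ (1 - p) ≤ r ^ (1 + p) * r ^ (1 - p) := by gcongr
    _ = r ^ 2 := by rw [← rpow_add' hr (by norm_num), ← rpow_two]; ring_nf

lemma div_norm_add_mul_I_sq_le {m : ℕ} {c α η η₀ p t : ℝ} (hc : 0 < c) (hα : 0 ≤ α)
    (hη₀ : 0 < η₀) (hη : η₀ ≤ η) (hp₀ : 0 ≤ p) (hp₁ : p ≤ 1) (ht : 0 < t) :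
    c / ‖((c * α : ℝ) : ℂ) + ((t ^ m : ℝ) : ℂ) + ((c * η : ℝ) : ℂ) * Complex.I‖ ^ 2 ≤
      c ^ p * η₀ ^ (p - 1) * t ^ (-(m * (1 + p))) := by
  set z : ℂ := ((c * α : ℝ) : ℂ) + ((t ^ m : ℝ) : ℂ) + ((c * η : ℝ) : ℂ) * Complex.I
  have hre : z.re = c * α + t ^ m := by simp [z, -Complex.ofReal_pow]
  have him : z.im = c * η := by simp [z, -Complex.ofReal_pow]
  have hz := rpow_one_add_mul_rpow_one_sub_le_sq (by positivity) (by positivity)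
    (by nlinarith [Complex.re_le_norm z] : t ^ m ≤ ‖z‖)
    (by nlinarith [Complex.im_le_norm z] : c * η₀ ≤ ‖z‖) hp₀ hp₁
  calc c / ‖z‖ ^ 2 ≤ c / ((t ^ m) ^ (1 + p) * (c * η₀) ^ (1 - p)) := by gcongr
    _ = c ^ p * η₀ ^ (p - 1) * t ^ (-(m * (1 + p))) := by
      rw [mul_rpow hc.le hη₀.le, ← rpow_natCast, ← rpow_mul ht.le, rpow_neg ht.le,
        show p - 1 = -(1 - p) by ring, rpow_neg hη₀.le]
      have hcp : c = c ^ p * c ^ (1 - p) := by rw [← rpow_add hc]; simp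
      nth_rewrite 1 [hcp]
      field_simp

theorem stmt_4 (d m : ℕ) (hm : 2 ≤ m) (hdm : m < d) (δ η₀ : ℝ)
    (hδ : δ ∈ Set.Ioo (0 : ℝ) 1) (hη₀ : 0 < η₀) :
    ∃ C : ℝ, 0 < C ∧ ∀ (ε α η : ℝ), ε ∈ Set.Ioo (0 : ℝ) 1 → 0 ≤ α → η₀ ≤ η →
      (∫ ξ : EuclideanSpace ℝ (Fin d),
          ε ^ m / ((1 + ‖ξ‖ ^ 2) ^ d *
            ‖((ε ^ m * α : ℝ) + (‖ξ‖ ^ m : ℝ) + (ε ^ m * η : ℝ) * Complex.I : ℂ)‖ ^ 2)) ≤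
        C * ε ^ (((if d ≤ 2 * m then d - m else m : ℕ) : ℝ) * (1 - δ)) *
          max (α ^ (((if d ≤ 2 * m then d - m else m : ℕ) : ℝ) * (1 - δ) / m)) 1 := by
  obtain ⟨hδ₀, hδ₁⟩ := hδ
  set L : ℕ := if d ≤ 2 * m then d - m else m with hL
  obtain ⟨hL₁, hLm, hmLd⟩ : (1 : ℝ) ≤ L ∧ (L : ℝ) ≤ m ∧ (m + L : ℝ) ≤ d := by
    norm_cast; split_ifs at hL <;> omega
  have hm₀ : (0 : ℝ) < m := Nat.cast_pos.2 (by omega)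
  set p : ℝ := L * (1 - δ) / m with hp
  have hmp : m * p = L * (1 - δ) := by rw [hp]; field_simp
  have hp₀ : 0 ≤ p := by positivity
  have hp₁ : p ≤ 1 := by rw [hp, div_le_one hm₀]; nlinarith
  set G : EuclideanSpace ℝ (Fin d) → ℝ :=
    fun ξ ↦ ((1 + ‖ξ‖ ^ 2) ^ d)⁻¹ * ‖ξ‖ ^ (-(m * (1 + p)))
  have hG : Integrable G := integrable_inv_one_add_norm_sq_pow_mul_norm_rpow_neg volume
    (by simp; omega) (by positivity)
    (by rw [finrank_euclideanSpace_fin, mul_one_add, hmp]; nlinarith)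
  have : Nontrivial (EuclideanSpace ℝ (Fin d)) :=
    nontrivial_of_finrank_pos (R := ℝ) (by simp; omega)
  refine ⟨η₀ ^ (p - 1) * max (∫ ξ, G ξ) 1, by positivity, fun ε α η ⟨hε, _⟩ hα hη ↦ ?_⟩
  calc _ ≤ ∫ ξ, ε ^ (L * (1 - δ) : ℝ) * η₀ ^ (p - 1) * G ξ := by
        refine integral_mono_of_nonneg (.of_forall fun ξ ↦ by positivity) (hG.const_mul _) ?_
        -- `G 0 = 0` since `0 ^ (-s) = 0`, so the bound holds only off the origin.
        filter_upwards [compl_mem_ae_iff.2 (measure_singleton 0)] with ξ hξ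
        rw [mul_comm, ← div_div, div_eq_inv_mul, ← hmp, rpow_mul hε.le, rpow_natCast]
        exact (mul_le_mul_of_nonneg_left (div_norm_add_mul_I_sq_le (pow_pos hε m) hα hη₀ hη
          hp₀ hp₁ (norm_pos_iff.2 hξ)) (by positivity)).trans_eq (by ring)
    _ = η₀ ^ (p - 1) * (∫ ξ, G ξ) * ε ^ (L * (1 - δ) : ℝ) * 1 := by
      rw [integral_const_mul]; ring
    _ ≤ _ := by gcongr; exacts [le_max_left _ _, le_max_right _ _]
end
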